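/- Let x be a sequence of length m with distinct elements, i ∈ {1,...,m-1}, and y = τ(x,i). Then the Skipped-number tables SN_x and SN_y differ in at most 3 positions, and all differing positions lie in {i, i+1, ref_x(i), ref_x(i+1), ref_y(i), ref_y(i+1)}. -/

import Mathlib

/-- Binary tree shapes (Cartesian trees are determined by their shape). -/
inductive BTree : Type
  | nil : BTree
  | node : BTree → BTree → BTree
deriving DecidableEq

namespace BTree

/-- Number of nodes. -/
def size : BTree → ℕ
  | nil => 0
  | node l r => size l + size r + 1

/-- Length of the leftmost path. -/
def LMP : BTree → ℕ
  | nil => 0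
  | node l _ => LMP l + 1

/-- Length of the rightmost path. -/
def RMP : BTree → ℕ
  | nil => 0
  | node _ r => RMP r + 1

end BTree

/-- Minimum value of a list (0 for the empty list). -/
def listMin : List ℤ → ℤ
  | [] => 0
  | a :: t => t.foldl min a

/-- Index (0-based) of the minimum of a list. -/
def minIdx (l : List ℤ) : ℕ := l.idxOf (listMin l)

/-- Cartesian tree of a list, with fuel for termination. -/
def ctreeAux : ℕ → List ℤ → BTree
  | 0, _ => .nil
  | _ + 1, [] => .nil
  | n + 1, a :: t =>
      let g := minIdx (a :: t)
      .node (ctreeAux n ((a :: t).take g)) (ctreeAux n ((a :: t).drop (g + 1)))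

/-- Cartesian tree of a list: the root is the position of the minimum,
its subtrees are the Cartesian trees of the prefix and suffix around it. -/
def ctreeL (l : List ℤ) : BTree := ctreeAux l.length l

/-- The factor x[a..b] (1-based positions) of a sequence, as a list. -/
def seqList (x : ℕ → ℤ) (a b : ℕ) : List ℤ :=
  (List.range (b + 1 - a)).map (fun k => x (a + k))

/-- Cartesian tree of the sequence x[1..m]. -/
def ctreeOf (m : ℕ) (x : ℕ → ℤ) : BTree := ctreeL (seqList x 1 m)

/-- Positions j < h (1-based) with x[j] < x[h]. -/
def PDset (x : ℕ → ℤ) (h : ℕ) : Finset ℕ :=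
  (Finset.Ico 1 h).filter (fun j => x j < x h)

/-- Parent-distance table: PD_x[h] = h - max{j < h : x[j] < x[h]}, 0 if no such j. -/
def PD (x : ℕ → ℤ) (h : ℕ) : ℕ :=
  if hs : (PDset x h).Nonempty then h - (PDset x h).max' hs else 0

/-- Positions h < j ≤ m with x[j] < x[h]. -/
def RPDset (m : ℕ) (x : ℕ → ℤ) (h : ℕ) : Finset ℕ :=
  (Finset.Ioc h m).filter (fun j => x j < x h)

/-- Reverse parent-distance table: RPD_x[h] = min{j > h : x[j] < x[h]} - h, 0 if no such j. -/
def RPD (m : ℕ) (x : ℕ → ℤ) (h : ℕ) : ℕ :=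
  if hs : (RPDset m x h).Nonempty then (RPDset m x h).min' hs - h else 0

/-- Referent of h: the smallest position j > h with x[j] < x[h], or -1 if none. -/
def refD (m : ℕ) (x : ℕ → ℤ) (h : ℕ) : ℤ :=
  if hs : (RPDset m x h).Nonempty then ((RPDset m x h).min' hs : ℤ) else -1

/-- Skipped-number table: SN_x[h] is the number of nodes on the rightmost path of the
left subtree of node h in C(x), i.e. the number of positions whose referent is h. -/
def SN (m : ℕ) (x : ℕ → ℤ) (h : ℕ) : ℕ :=
  ((Finset.Ico 1 h).filter (fun j => refD m x j = (h : ℤ))).card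

/-- The swap τ(x,i): exchange the entries at positions i and i+1. -/
def swapAt (x : ℕ → ℤ) (i : ℕ) : ℕ → ℤ :=
  fun j => if j = i then x (i + 1) else if j = i + 1 then x i else x j

/-- ng(T,i): the Cartesian trees obtained from a sequence realizing T by one swap
at position i (valid positions are 1 ≤ i ≤ m-1). -/
def ngi (m : ℕ) (T : BTree) (i : ℕ) : Set BTree :=
  { S | 1 ≤ i ∧ i + 1 ≤ m ∧ ∃ x : ℕ → ℤ, Set.InjOn x (Set.Icc 1 m) ∧
        ctreeOf m x = T ∧ S = ctreeOf m (swapAt x i) }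

/-- ng(T): the swap neighbourhood of T. -/
def ng (m : ℕ) (T : BTree) : Set BTree := ⋃ i, ngi m T i

/-- Number of permutations of {1,...,n} whose Cartesian tree is A. -/
noncomputable def permCount (n : ℕ) (A : BTree) : ℕ :=
  Set.ncard { σ : Equiv.Perm (Fin n) |
    ctreeL (List.ofFn (fun k : Fin n => ((σ k : ℕ) : ℤ) + 1)) = A }

/-- Product over all nodes t of A of the size of the subtree rooted at t. -/
def hookProd : BTree → ℕ
  | .nil => 1
  | .node l r => (BTree.node l r).size * hookProd l * hookProd r

/-!
Let `y = τ(x, i)`. When `x i < x (i + 1)`, swapping gives `ref_y(i) = i + 1` and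
`ref_y(i + 1) = ref_x(i)`, leaves the referents of positions beyond `i + 1` unchanged, and for a
position `j < i` it changes its referent only if that referent is `i` or `i + 1`, since the
window between `j` and any other candidate contains both or neither of the swapped entries.
Hence the transposition `(i i+1)` matches the positions with referent `h` in `y` and in `x` for
every `h ∉ {i, i + 1, ref_x(i + 1)}`. The case `x i > x (i + 1)` follows because `τ` is an
involution, and `x i = x (i + 1)` is trivial.
-/

section Referent

variable {m : ℕ} {x : ℕ → ℤ}

lemma refD_eq_iff_isLeast {j h : ℕ} :
    refD m x j = h ↔ IsLeast (RPDset m x j : Set ℕ) h := by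
  unfold refD
  split_ifs with hs
  · rw [Nat.cast_inj]
    exact ⟨fun e => e ▸ Finset.isLeast_min' _ hs, (Finset.isLeast_min' _ hs).unique⟩
  · exact iff_of_false id fun hl => hs ⟨h, hl.1⟩

lemma refD_eq_iff {j h : ℕ} :
    refD m x j = h ↔ (j < h ∧ h ≤ m ∧ x h < x j) ∧ ∀ k ∈ Set.Ioo j h, x j ≤ x k := by
  simp only [refD_eq_iff_isLeast, IsLeast, lowerBounds, RPDset, Finset.coe_filter,
    Finset.mem_Ioc, Set.mem_ofPred_eq, Set.mem_Ioo, and_assoc]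
  refine and_congr_right fun hjh => and_congr_right fun hhm => and_congr_right fun _ =>
    ⟨fun H k hk => ?_, fun H k hk => ?_⟩
  · by_contra! hlt
    exact absurd (H ⟨hk.1, by omega, hlt⟩) (by omega)
  · by_contra! hlt
    exact absurd (H k ⟨hk.1, hlt⟩) (not_le.2 hk.2.2)

lemma refD_congr {x' : ℕ → ℤ} {j : ℕ} (hx : ∀ k, j ≤ k → x k = x' k) :
    refD m x j = refD m x' j := by
  have hset : RPDset m x j = RPDset m x' j :=
    Finset.filter_congr fun k hk => by
      rw [hx k (Finset.mem_Ioc.1 hk).1.le, hx j le_rfl]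
  rw [refD, refD, hset]

end Referent

section Swap

variable {m i : ℕ} {x : ℕ → ℤ}

lemma swapAt_eq_comp (x : ℕ → ℤ) (i : ℕ) : swapAt x i = x ∘ Equiv.swap i (i + 1) := by
  funext j
  simp only [swapAt, Function.comp_apply, Equiv.swap_apply_def]
  split_ifs <;> rfl

lemma swapAt_swapAt (x : ℕ → ℤ) (i : ℕ) : swapAt (swapAt x i) i = x := by
  funext j
  simp [swapAt_eq_comp]

lemma swapAt_of_eq (hx : x i = x (i + 1)) : swapAt x i = x := by
  funext j
  simp only [swapAt]
  split_ifs with hi hi'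
  · rw [hi, hx]
  · rw [hi', hx]
  · rfl

lemma refD_swapAt_self (hlt : x i < x (i + 1)) (him : i + 1 ≤ m) :
    refD m (swapAt x i) i = (i + 1 : ℕ) := by
  rw [refD_eq_iff, swapAt_eq_comp]
  simp only [Function.comp_apply, Equiv.swap_apply_left, Equiv.swap_apply_right]
  exact ⟨⟨by omega, him, hlt⟩, fun k ⟨hik, hki⟩ => by omega⟩

lemma refD_swapAt_succ (hlt : x i < x (i + 1)) :
    refD m (swapAt x i) (i + 1) = refD m x i := by
  have hset : RPDset m (swapAt x i) (i + 1) = RPDset m x i := by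
    ext k
    simp only [RPDset, Finset.mem_filter, Finset.mem_Ioc, swapAt_eq_comp, Function.comp_apply,
      Equiv.swap_apply_right]
    rcases lt_or_ge (i + 1) k with hk | hk
    · rw [Equiv.swap_apply_of_ne_of_ne (by omega) (by omega)]
      exact and_congr_left fun _ => and_congr_left fun _ => ⟨by omega, by omega⟩
    · refine iff_of_false (fun h => by omega) fun ⟨⟨hik, _⟩, hxk⟩ => ?_
      obtain rfl : k = i + 1 := by omega
      exact hlt.not_gt hxk
  rw [refD, refD, hset]

lemma refD_swapAt_of_succ_lt {j : ℕ} (hj : i + 1 < j) :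
    refD m (swapAt x i) j = refD m x j :=
  refD_congr fun k hk => by
    rw [swapAt_eq_comp, Function.comp_apply, Equiv.swap_apply_of_ne_of_ne (by omega) (by omega)]

lemma refD_swapAt_eq_iff_of_lt {j h : ℕ} (hj : j < i) (hhi : h ≠ i) (hhi' : h ≠ i + 1) :
    refD m (swapAt x i) j = h ↔ refD m x j = h := by
  have hmaps : ∀ k ∈ Set.Ioo j h, Equiv.swap i (i + 1) k ∈ Set.Ioo j h := by
    intro k hk
    rw [Set.mem_Ioo] at hk ⊢
    rw [Equiv.swap_apply_def]
    split_ifs <;> omega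
  simp only [refD_eq_iff, swapAt_eq_comp, Function.comp_apply,
    Equiv.swap_apply_of_ne_of_ne hj.ne (by omega : j ≠ i + 1), Equiv.swap_apply_of_ne_of_ne hhi hhi']
  refine and_congr_right fun _ => ⟨fun H k hk => ?_, fun H k hk => H _ (hmaps k hk)⟩
  simpa using H _ (hmaps k hk)

end Swap

section SkippedNumbers

variable {m i : ℕ} {x : ℕ → ℤ}

lemma SN_swapAt_of_lt (hi1 : 1 ≤ i) (him : i + 1 ≤ m) (hlt : x i < x (i + 1)) {h : ℕ}
    (hhi : h ≠ i) (hhi' : h ≠ i + 1) (href : (h : ℤ) ≠ refD m x (i + 1)) :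
    SN m (swapAt x i) h = SN m x h := by
  refine Finset.card_equiv (Equiv.swap i (i + 1)) fun j => ?_
  simp only [Finset.mem_filter, Finset.mem_Ico]
  obtain rfl | rfl | ⟨hji, hji'⟩ : j = i ∨ j = i + 1 ∨ (j ≠ i ∧ j ≠ i + 1) := by omega
  · rw [Equiv.swap_apply_left, refD_swapAt_self hlt him, Nat.cast_inj]
    exact ⟨fun H => absurd H.2.symm hhi', fun H => absurd H.2.symm href⟩
  · rw [Equiv.swap_apply_right, refD_swapAt_succ hlt]
    refine and_congr_left fun hr => ?_
    have := (refD_eq_iff.1 hr).1.1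
    omega
  · rw [Equiv.swap_apply_of_ne_of_ne hji hji']
    refine and_congr_right fun _ => ?_
    rcases lt_or_gt_of_ne hji with hj | hj
    · exact refD_swapAt_eq_iff_of_lt hj hhi hhi'
    · rw [refD_swapAt_of_succ_lt (by omega)]

lemma exists_refD_succ_forall_SN_swapAt_ne (hi1 : 1 ≤ i) (him : i + 1 ≤ m) :
    ∃ c, (c = refD m x (i + 1) ∨ c = refD m (swapAt x i) (i + 1)) ∧
      ∀ h, SN m (swapAt x i) h ≠ SN m x h → h = i ∨ h = i + 1 ∨ (h : ℤ) = c := by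
  rcases lt_trichotomy (x i) (x (i + 1)) with hlt | heq | hgt
  · refine ⟨_, Or.inl rfl, fun h hne => ?_⟩
    by_contra! H
    exact hne (SN_swapAt_of_lt hi1 him hlt H.1 H.2.1 H.2.2)
  · refine ⟨_, Or.inl rfl, fun h hne => absurd (by rw [swapAt_of_eq heq]) hne⟩
  · refine ⟨_, Or.inr rfl, fun h hne => ?_⟩
    have hlt : swapAt x i i < swapAt x i (i + 1) := by
      simpa [swapAt_eq_comp] using hgt
    by_contra! H
    have := SN_swapAt_of_lt hi1 him hlt H.1 H.2.1 H.2.2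
    rw [swapAt_swapAt] at this
    exact hne this.symm

end SkippedNumbers

theorem stmt16_general (m i : ℕ) (x : ℕ → ℤ)
    (hi1 : 1 ≤ i) (him : i + 1 ≤ m) :
    ((Finset.Icc 1 m).filter (fun j => SN m (swapAt x i) j ≠ SN m x j)).card ≤ 3 ∧
    ∀ j ∈ (Finset.Icc 1 m).filter (fun j => SN m (swapAt x i) j ≠ SN m x j),
      j = i ∨ j = i + 1 ∨ (j : ℤ) = refD m x i ∨ (j : ℤ) = refD m x (i + 1) ∨
      (j : ℤ) = refD m (swapAt x i) i ∨ (j : ℤ) = refD m (swapAt x i) (i + 1) := by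
  obtain ⟨c, hc, hdiff⟩ := exists_refD_succ_forall_SN_swapAt_ne (x := x) hi1 him
  refine ⟨?_, fun j hj => ?_⟩
  · calc _ ≤ ({i, i + 1, c.toNat} : Finset ℕ).card := by
          refine Finset.card_le_card fun j hj => ?_
          rcases hdiff j (Finset.mem_filter.1 hj).2 with rfl | rfl | hjc
          · simp
          · simp
          · simp [← hjc]
      _ ≤ 3 := Finset.card_le_three
  · rcases hdiff j (Finset.mem_filter.1 hj).2 with hji | hji | hjc
    · exact Or.inl hji
    · exact Or.inr (Or.inl hji)
    · rcases hc with rfl | rfl <;> simp [hjc]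

theorem stmt16 (m i : ℕ) (x : ℕ → ℤ) (hx : Set.InjOn x (Set.Icc 1 m))
    (hi1 : 1 ≤ i) (him : i + 1 ≤ m) :
    ((Finset.Icc 1 m).filter (fun j => SN m (swapAt x i) j ≠ SN m x j)).card ≤ 3 ∧
    ∀ j ∈ (Finset.Icc 1 m).filter (fun j => SN m (swapAt x i) j ≠ SN m x j),
      j = i ∨ j = i + 1 ∨ (j : ℤ) = refD m x i ∨ (j : ℤ) = refD m x (i + 1) ∨
      (j : ℤ) = refD m (swapAt x i) i ∨ (j : ℤ) = refD m (swapAt x i) (i + 1) :=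
  stmt16_general m i x hi1 him
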